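/- arXiv:2011.10262 — 4 statements merged into one kernel-verified Lean document; each statement's English description precedes it below -/
import Mathlib

section
/- Let a, b > 0 and r be a real number. Then for every x ≥ 0, the integral ∫_x^∞ u^{a-1} (Log u)^r e^{-b u^a} du is finite, where Log u := log(max(u, e)). Moreover, as x → ∞, ∫_x^∞ u^{a-1} (Log u)^r e^{-b u^a} du = O((1 + (Log x)^r) e^{-b x^a}). -/
/-!
For `0 ≤ x ≤ u` one has `Log u - Log x ≤ (u ^ a - x ^ a) / (a e ^ a)` (compare `log` with
`u ↦ u ^ a` above `e`, and note that `Log` is constant below `e`). Since `Log x ≥ 1`, this gives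
`(Log u) ^ r ≤ C (Log x) ^ r exp (b / 2 (u ^ a - x ^ a))` uniformly in `0 ≤ x ≤ u`, so on `[x, ∞)`
the integrand is dominated by `C (Log x) ^ r exp (-b x ^ a / 2)` times
`u ^ (a - 1) exp (-b u ^ a / 2)`, and the latter integrates over `[x, ∞)` to
`exp (-b x ^ a / 2) / (a b / 2)` by the fundamental theorem of calculus.
-/

open Filter Asymptotics MeasureTheory

noncomputable def Log (x : ℝ) : ℝ := Real.log (max x (Real.exp 1))

open Real Set Topology

lemma one_le_Log (x : ℝ) : 1 ≤ Log x := by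
  rw [← log_exp 1, Log]
  exact log_le_log (exp_pos 1) (le_max_right _ _)

lemma Log_pos (x : ℝ) : 0 < Log x := one_pos.trans_le (one_le_Log x)

lemma monotone_Log : Monotone Log := fun _ _ h =>
  log_le_log (lt_max_of_lt_right (exp_pos 1)) (max_le_max_right _ h)

lemma one_add_rpow_le_mul_exp {q c t : ℝ} (hq : 0 ≤ q) (hc : 0 < c) (ht : 0 ≤ t) :
    (1 + t) ^ q ≤ ((q + c) / c) ^ q * exp (c * t) := by
  have hqc : 0 < q + c := by linarith
  -- `1 + t ≤ M (1 + t / M) ≤ M exp (t / M)` with `M = (q + c) / c`, and `q / M ≤ c`.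
  have hlin : 1 + t ≤ (q + c) / c * exp (c * t / (q + c)) := calc
    1 + t ≤ (q + c) / c * (c * t / (q + c) + 1) := by
      have hM : 1 ≤ (q + c) / c := by rw [le_div_iff₀ hc]; linarith
      have : (q + c) / c * (c * t / (q + c) + 1) = t + (q + c) / c := by field_simp
      linarith
    _ ≤ (q + c) / c * exp (c * t / (q + c)) := by gcongr; exact add_one_le_exp _
  calc (1 + t) ^ q ≤ ((q + c) / c * exp (c * t / (q + c))) ^ q := by gcongr
    _ = ((q + c) / c) ^ q * exp (q * (c * t / (q + c))) := by
      rw [mul_rpow (by positivity) (exp_pos _).le, ← exp_mul, mul_comm q]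
    _ ≤ ((q + c) / c) ^ q * exp (c * t) := by
      refine mul_le_mul_of_nonneg_left (exp_le_exp.2 ?_) (by positivity)
      rw [mul_div_assoc', div_le_iff₀ hqc]
      nlinarith [mul_nonneg hc.le ht]

lemma log_sub_log_le_rpow_sub_rpow {x u a : ℝ} (hx : 0 < x) (hu : 0 < u) (ha : 0 < a) :
    log u - log x ≤ (u ^ a - x ^ a) / (a * x ^ a) := by
  have hxa : 0 < x ^ a := rpow_pos_of_pos hx a
  have key : a * (log u - log x) ≤ u ^ a / x ^ a - 1 := by
    rw [← log_div hu.ne' hx.ne', ← log_rpow (div_pos hu hx), div_rpow hu.le hx.le]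
    exact log_le_sub_one_of_pos (by positivity)
  rw [le_div_iff₀ (by positivity)]
  rw [div_sub_one hxa.ne', le_div_iff₀ hxa] at key
  linarith

lemma max_rpow_sub_max_rpow_le {x u a : ℝ} (m : ℝ) (hx : 0 ≤ x) (hxu : x ≤ u) (ha : 0 ≤ a) :
    max u m ^ a - max x m ^ a ≤ u ^ a - x ^ a := by
  rcases le_total u m with hum | hmu
  · rw [max_eq_right hum, max_eq_right (hxu.trans hum), sub_self, sub_nonneg]
    exact rpow_le_rpow hx hxu ha
  · rw [max_eq_left hmu]
    gcongr
    exact le_max_left _ _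

lemma Log_sub_Log_le {x u a : ℝ} (hx : 0 ≤ x) (hxu : x ≤ u) (ha : 0 < a) :
    Log u - Log x ≤ (u ^ a - x ^ a) / (a * exp a) := by
  have hX : exp 1 ≤ max x (exp 1) := le_max_right _ _
  have hXU : max x (exp 1) ≤ max u (exp 1) := max_le_max_right _ hxu
  have hXa : exp a ≤ max x (exp 1) ^ a := by
    rw [← exp_one_rpow]; exact rpow_le_rpow (exp_pos 1).le hX ha.le
  calc Log u - Log x
      ≤ (max u (exp 1) ^ a - max x (exp 1) ^ a) / (a * max x (exp 1) ^ a) :=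
        log_sub_log_le_rpow_sub_rpow ((exp_pos 1).trans_le hX)
          ((exp_pos 1).trans_le (hX.trans hXU)) ha
    _ ≤ (max u (exp 1) ^ a - max x (exp 1) ^ a) / (a * exp a) := by
        have : max x (exp 1) ^ a ≤ max u (exp 1) ^ a :=
          rpow_le_rpow ((exp_pos 1).le.trans hX) hXU ha.le
        gcongr
    _ ≤ (u ^ a - x ^ a) / (a * exp a) := by
        gcongr ?_ / _
        exact max_rpow_sub_max_rpow_le _ hx hxu ha.le

lemma Log_rpow_le_mul_exp (r : ℝ) {a c : ℝ} (ha : 0 < a) (hc : 0 < c) :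
    ∃ C, ∀ x u, 0 ≤ x → x ≤ u → Log u ^ r ≤ C * Log x ^ r * exp (c * (u ^ a - x ^ a)) := by
  rcases lt_or_ge r 0 with hr | hr
  · refine ⟨1, fun x u hx hxu => ?_⟩
    have hw : 0 ≤ c * (u ^ a - x ^ a) :=
      mul_nonneg hc.le (sub_nonneg.2 (rpow_le_rpow hx hxu ha.le))
    calc Log u ^ r ≤ Log x ^ r := rpow_le_rpow_of_nonpos (Log_pos x) (monotone_Log hxu) hr.le
      _ ≤ 1 * Log x ^ r * exp (c * (u ^ a - x ^ a)) := by
        rw [one_mul]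
        exact le_mul_of_one_le_right (rpow_nonneg (Log_pos x).le r) (one_le_exp hw)
  · set K := a * exp a
    have hK : 0 < K := by positivity
    refine ⟨((r + c * K) / (c * K)) ^ r, fun x u hx hxu => ?_⟩
    set w := u ^ a - x ^ a
    have hw : 0 ≤ w / K := div_nonneg (sub_nonneg.2 (rpow_le_rpow hx hxu ha.le)) hK.le
    have hLog : Log u ≤ Log x * (1 + w / K) := by
      nlinarith [Log_sub_Log_le hx hxu ha, one_le_Log x]
    calc Log u ^ r ≤ (Log x * (1 + w / K)) ^ r := rpow_le_rpow (Log_pos u).le hLog hr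
      _ = Log x ^ r * (1 + w / K) ^ r := mul_rpow (Log_pos x).le (by positivity)
      _ ≤ Log x ^ r * (((r + c * K) / (c * K)) ^ r * exp (c * K * (w / K))) :=
        mul_le_mul_of_nonneg_left (one_add_rpow_le_mul_exp hr (by positivity) hw)
          (rpow_nonneg (Log_pos x).le r)
      _ = ((r + c * K) / (c * K)) ^ r * Log x ^ r * exp (c * w) := by
        rw [mul_assoc c, mul_div_cancel₀ _ hK.ne']; ring

lemma hasDerivAt_exp_neg_mul_rpow_div {a c u : ℝ} (hu : 0 < u) (ha : a ≠ 0) (hc : c ≠ 0) :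
    HasDerivAt (fun t => -exp (-(c * t ^ a)) / (a * c)) (u ^ (a - 1) * exp (-(c * u ^ a))) u := by
  have hpow : HasDerivAt (fun t => -(c * t ^ a)) (-(c * (a * u ^ (a - 1)))) u :=
    ((hasDerivAt_rpow_const (Or.inl hu.ne')).const_mul c).fun_neg
  refine (hpow.exp.fun_neg.div_const (a * c)).congr_deriv ?_
  field_simp

lemma integrableOn_Ioi_rpow_mul_exp_neg_mul_rpow {a c x : ℝ} (ha : 0 < a) (hc : 0 < c)
    (hx : 0 ≤ x) :
    IntegrableOn (fun u => u ^ (a - 1) * exp (-(c * u ^ a))) (Ioi x) := by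
  refine (integrableOn_rpow_mul_exp_neg_mul_rpow (s := a - 1) (by linarith) ha hc).mono_set
    (Ioi_subset_Ioi hx) |>.congr_fun (fun u _ => ?_) measurableSet_Ioi
  simp only [neg_mul]

lemma integral_Ioi_rpow_mul_exp_neg_mul_rpow {a c x : ℝ} (ha : 0 < a) (hc : 0 < c)
    (hx : 0 ≤ x) :
    ∫ u in Ioi x, u ^ (a - 1) * exp (-(c * u ^ a)) = exp (-(c * x ^ a)) / (a * c) := by
  have hF : Tendsto (fun t => -exp (-(c * t ^ a)) / (a * c)) atTop (𝓝 0) := by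
    have := (tendsto_exp_neg_atTop_nhds_zero.comp
      ((tendsto_rpow_atTop ha).const_mul_atTop hc)).neg.div_const (a * c)
    simpa using this
  rw [integral_Ioi_of_hasDerivAt_of_tendsto (f := fun t => -exp (-(c * t ^ a)) / (a * c)) ?_
    (fun u hu => ?_) (integrableOn_Ioi_rpow_mul_exp_neg_mul_rpow ha hc hx) hF]
  · ring
  · exact ((continuousAt_rpow_const x a (Or.inr ha.le)).const_mul c).neg.rexp.neg.div_const _
      |>.continuousWithinAt
  · exact hasDerivAt_exp_neg_mul_rpow_div (hx.trans_lt hu) ha.ne' hc.ne'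

lemma rpow_mul_Log_rpow_mul_exp_neg_nonneg (r a b : ℝ) {u : ℝ} (hu : 0 ≤ u) :
    0 ≤ u ^ (a - 1) * Log u ^ r * exp (-(b * u ^ a)) :=
  mul_nonneg (mul_nonneg (rpow_nonneg hu _) (rpow_nonneg (Log_pos u).le _)) (exp_pos _).le

lemma rpow_mul_Log_rpow_mul_exp_neg_le (r : ℝ) {a b : ℝ} (ha : 0 < a) (hb : 0 < b) :
    ∃ C, ∀ x u, 0 ≤ x → x ≤ u →
    u ^ (a - 1) * Log u ^ r * exp (-(b * u ^ a)) ≤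
      C * Log x ^ r * exp (-(b / 2 * x ^ a)) * (u ^ (a - 1) * exp (-(b / 2 * u ^ a))) := by
  obtain ⟨C, hC⟩ := Log_rpow_le_mul_exp r ha (half_pos hb)
  refine ⟨C, fun x u hx hxu => ?_⟩
  have hexp : exp (b / 2 * (u ^ a - x ^ a)) * exp (-(b * u ^ a)) =
      exp (-(b / 2 * x ^ a)) * exp (-(b / 2 * u ^ a)) := by
    rw [← exp_add, ← exp_add]; ring_nf
  calc u ^ (a - 1) * Log u ^ r * exp (-(b * u ^ a))
      ≤ u ^ (a - 1) * (C * Log x ^ r * exp (b / 2 * (u ^ a - x ^ a))) * exp (-(b * u ^ a)) := by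
        gcongr
        · exact rpow_nonneg (hx.trans hxu) _
        · exact hC x u hx hxu
    _ = C * Log x ^ r * exp (-(b / 2 * x ^ a)) * (u ^ (a - 1) * exp (-(b / 2 * u ^ a))) := by
        linear_combination u ^ (a - 1) * C * Log x ^ r * hexp

lemma integrableOn_Ioi_rpow_mul_Log_rpow_mul_exp_neg (r : ℝ) {a b x : ℝ} (ha : 0 < a) (hb : 0 < b)
    (hx : 0 ≤ x) :
    IntegrableOn (fun u => u ^ (a - 1) * Log u ^ r * exp (-(b * u ^ a))) (Ioi x) := by
  obtain ⟨C, hC⟩ := rpow_mul_Log_rpow_mul_exp_neg_le r ha hb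
  refine ((integrableOn_Ioi_rpow_mul_exp_neg_mul_rpow ha (half_pos hb) hx).const_mul
    (C * Log x ^ r * exp (-(b / 2 * x ^ a)))).mono' (by unfold Log; fun_prop) ?_
  filter_upwards [ae_restrict_mem measurableSet_Ioi] with u hu
  rw [norm_of_nonneg (rpow_mul_Log_rpow_mul_exp_neg_nonneg r a b (hx.trans hu.out.le))]
  exact hC x u hx hu.out.le

lemma isBigO_integral_Ioi_rpow_mul_Log_rpow_mul_exp_neg (r : ℝ) {a b : ℝ} (ha : 0 < a)
    (hb : 0 < b) :
    (fun x => ∫ u in Ioi x, u ^ (a - 1) * Log u ^ r * exp (-(b * u ^ a)))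
      =O[atTop] fun x => Log x ^ r * exp (-(b * x ^ a)) := by
  obtain ⟨C, hC⟩ := rpow_mul_Log_rpow_mul_exp_neg_le r ha hb
  refine IsBigO.of_bound (C / (a * (b / 2))) ?_
  filter_upwards [eventually_ge_atTop 0] with x hx
  have hexp : exp (-(b / 2 * x ^ a)) * exp (-(b / 2 * x ^ a)) = exp (-(b * x ^ a)) := by
    rw [← exp_add]; ring_nf
  rw [norm_of_nonneg (setIntegral_nonneg measurableSet_Ioi
      fun u hu => rpow_mul_Log_rpow_mul_exp_neg_nonneg r a b (hx.trans hu.out.le)),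
    norm_of_nonneg (mul_nonneg (rpow_nonneg (Log_pos x).le r) (exp_pos _).le)]
  calc ∫ u in Ioi x, u ^ (a - 1) * Log u ^ r * exp (-(b * u ^ a))
      ≤ ∫ u in Ioi x, C * Log x ^ r * exp (-(b / 2 * x ^ a)) *
          (u ^ (a - 1) * exp (-(b / 2 * u ^ a))) :=
        setIntegral_mono_on (integrableOn_Ioi_rpow_mul_Log_rpow_mul_exp_neg r ha hb hx)
          ((integrableOn_Ioi_rpow_mul_exp_neg_mul_rpow ha (half_pos hb) hx).const_mul _)
          measurableSet_Ioi fun u hu => hC x u hx hu.out.le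
    _ = C / (a * (b / 2)) * (Log x ^ r * exp (-(b * x ^ a))) := by
        rw [integral_const_mul, integral_Ioi_rpow_mul_exp_neg_mul_rpow ha (half_pos hb) hx, ← hexp]
        ring

theorem stmt_0 (a b r : ℝ) (ha : 0 < a) (hb : 0 < b) :
    (∀ x : ℝ, 0 ≤ x →
      IntegrableOn (fun u : ℝ => u ^ (a - 1) * Log u ^ r * Real.exp (-(b * u ^ a)))
        (Set.Ici x)) ∧
    (fun x : ℝ => ∫ u in Set.Ici x, u ^ (a - 1) * Log u ^ r * Real.exp (-(b * u ^ a)))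
      =O[atTop] (fun x : ℝ => (1 + Log x ^ r) * Real.exp (-(b * x ^ a))) := by
  refine ⟨fun x hx => (integrableOn_Ici_iff_integrableOn_Ioi).2
    (integrableOn_Ioi_rpow_mul_Log_rpow_mul_exp_neg r ha hb hx), ?_⟩
  simp_rw [integral_Ici_eq_integral_Ioi]
  refine (isBigO_integral_Ioi_rpow_mul_Log_rpow_mul_exp_neg r ha hb).trans
    (isBigO_of_le _ fun x => ?_)
  have hnonneg : 0 ≤ Log x ^ r * exp (-(b * x ^ a)) :=
    mul_nonneg (rpow_nonneg (Log_pos x).le r) (exp_pos _).le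
  have hle : Log x ^ r * exp (-(b * x ^ a)) ≤ (1 + Log x ^ r) * exp (-(b * x ^ a)) := by
    gcongr; linarith
  rwa [norm_of_nonneg hnonneg, norm_of_nonneg (hnonneg.trans hle)]
end

section
/- For all real numbers α and δ with δ > 1, the tail sums satisfy ∑_{k=n}^∞ (Log k)^α / k^δ ~ n^{1-δ} (Log n)^α / (δ - 1) as n → ∞, where Log x := log(max{x, e}). -/
/-!
Put `G(x) = x^(1-δ) (log x)^α / (δ-1)`. Then `-G'(x) = (log x)^α x^(-δ) (1 - α / ((δ-1) log x))`,
which is equivalent to `(log x)^α / x^δ` and barely changes on `[k, k+1]`, so by the mean value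
theorem `G(k) - G(k+1) ~ (log k)^α / k^δ`. As `G → 0`, the tail from `n` of the telescoping
series `∑ (G(k) - G(k+1))` is `G(n)`, and equivalence of terms of a nonnegative summable series
passes to its tails.
-/

open Filter Asymptotics

open Topology

theorem Asymptotics.IsEquivalent.tsum_nat_add {a b : ℕ → ℝ} (hab : a ~[atTop] b)
    (hb : ∀ᶠ k in atTop, 0 ≤ b k) (hsum : Summable b) :
    (fun n ↦ ∑' k, a (n + k)) ~[atTop] fun n ↦ ∑' k, b (n + k) := by
  refine isLittleO_iff.2 fun ε hε ↦ ?_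
  obtain ⟨N, hN⟩ := eventually_atTop.1 ((isLittleO_iff.1 hab hε).and hb)
  filter_upwards [eventually_ge_atTop N] with n hn
  have hbound : ∀ k, ‖a (n + k) - b (n + k)‖ ≤ ε * b (n + k) := fun k ↦ by
    obtain ⟨hk, hk0⟩ := hN (n + k) (by omega)
    rwa [Real.norm_of_nonneg hk0] at hk
  have hb_tail : HasSum (fun k ↦ b (n + k)) (∑' k, b (n + k)) :=
    (((summable_nat_add_iff n).2 hsum).congr fun k ↦ by rw [add_comm]).hasSum
  have hdiff : Summable fun k ↦ a (n + k) - b (n + k) :=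
    .of_norm_bounded (hb_tail.summable.mul_left ε) hbound
  have hsplit : ∑' k, a (n + k) = ∑' k, (a (n + k) - b (n + k)) + ∑' k, b (n + k) := by
    rw [← hdiff.tsum_add hb_tail.summable]
    simp
  calc ‖∑' k, a (n + k) - ∑' k, b (n + k)‖
      = ‖∑' k, (a (n + k) - b (n + k))‖ := by rw [hsplit, add_sub_cancel_right]
    _ ≤ ε * ∑' k, b (n + k) := tsum_of_norm_bounded (hb_tail.mul_left ε) hbound
    _ = ε * ‖∑' k, b (n + k)‖ := by
      rw [Real.norm_of_nonneg (tsum_nonneg fun k ↦ (hN (n + k) (by omega)).2)]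

theorem hasSum_sub_succ_of_tendsto_zero {G : ℕ → ℝ} (hG : Tendsto G atTop (𝓝 0))
    (hanti : ∀ k, G (k + 1) ≤ G k) : HasSum (fun k ↦ G k - G (k + 1)) (G 0) := by
  refine (hasSum_iff_tendsto_nat_of_nonneg (fun k ↦ sub_nonneg.2 (hanti k)) _).2 ?_
  simp_rw [Finset.sum_range_sub']
  simpa using tendsto_const_nhds.sub hG

theorem eventually_hasSum_nat_add_sub_succ {G : ℕ → ℝ} (hG : Tendsto G atTop (𝓝 0))
    (hanti : ∀ᶠ k in atTop, G (k + 1) ≤ G k) :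
    ∀ᶠ n in atTop, HasSum (fun k ↦ G (n + k) - G (n + k + 1)) (G n) := by
  obtain ⟨N, hN⟩ := eventually_atTop.1 hanti
  filter_upwards [eventually_ge_atTop N] with n hn
  exact hasSum_sub_succ_of_tendsto_zero (hG.comp ((tendsto_add_atTop_nat n).congr (add_comm · n)))
    fun k ↦ hN (n + k) (by omega)

theorem isEquivalent_natCast_of_mem_Icc {c : ℕ → ℝ}
    (hc : ∀ᶠ k : ℕ in atTop, (k : ℝ) ≤ c k ∧ c k ≤ k + 1) :
    c ~[atTop] fun k : ℕ ↦ (k : ℝ) := by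
  have hbdd : (c - fun k : ℕ ↦ (k : ℝ)) =O[atTop] fun _ ↦ (1 : ℝ) :=
    IsBigO.of_bound 1 <| hc.mono fun k hk ↦ by
      simp only [Pi.sub_apply, Real.norm_eq_abs, norm_one, mul_one, abs_le]
      constructor <;> linarith [hk.1, hk.2]
  exact hbdd.trans_isLittleO <| isLittleO_one_left_iff ℝ |>.2 <|
    tendsto_norm_atTop_atTop.comp tendsto_natCast_atTop_atTop

theorem isEquivalent_sub_succ_of_hasDerivAt {F F' : ℝ → ℝ}
    (hF : ∀ᶠ x in atTop, HasDerivAt F (F' x) x)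
    (hF' : ∀ c : ℕ → ℝ, (∀ᶠ k : ℕ in atTop, (k : ℝ) ≤ c k ∧ c k ≤ k + 1) →
      (fun k ↦ F' (c k)) ~[atTop] fun k ↦ F' k) :
    (fun k : ℕ ↦ F (k + 1) - F k) ~[atTop] fun k ↦ F' k := by
  obtain ⟨X, hX⟩ := eventually_atTop.1 hF
  have hmvt : ∀ k : ℕ, ∃ c, X ≤ k → (k : ℝ) ≤ c ∧ c ≤ k + 1 ∧ F (k + 1) - F k = F' c := by
    intro k
    by_cases hk : X ≤ k
    · obtain ⟨c, hc, hslope⟩ := exists_hasDerivAt_eq_slope F F' (lt_add_one (k : ℝ))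
        (fun x hx ↦ (hX x (hk.trans hx.1)).continuousAt.continuousWithinAt)
        (fun x hx ↦ hX x (hk.trans hx.1.le))
      exact ⟨c, fun _ ↦ ⟨hc.1.le, hc.2.le, by simpa using hslope.symm⟩⟩
    · exact ⟨0, fun h ↦ absurd h hk⟩
  choose c hc using hmvt
  have hX' : ∀ᶠ k : ℕ in atTop, X ≤ k := tendsto_natCast_atTop_atTop.eventually_ge_atTop X
  exact EventuallyEq.trans_isEquivalent (hX'.mono fun k hk ↦ (hc k hk).2.2)
    (hF' c (hX'.mono fun k hk ↦ ⟨(hc k hk).1, (hc k hk).2.1⟩))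

theorem Log_eventuallyEq_log : Log =ᶠ[atTop] Real.log :=
  (eventually_ge_atTop (Real.exp 1)).mono fun x hx ↦ by rw [Log, max_eq_left hx]

noncomputable def logWeight (α δ x : ℝ) : ℝ := Real.log x ^ α / x ^ δ

noncomputable def logWeightTail (α δ x : ℝ) : ℝ := x ^ (1 - δ) * Real.log x ^ α / (δ - 1)

section LogWeight

variable {α δ : ℝ}

theorem logWeight_pos {x : ℝ} (hx : 1 < x) : 0 < logWeight α δ x :=
  div_pos (Real.rpow_pos_of_pos (Real.log_pos hx) α) (Real.rpow_pos_of_pos (by linarith) δ)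

theorem hasDerivAt_logWeightTail (hδ : δ ≠ 1) {x : ℝ} (hx : 1 < x) :
    HasDerivAt (logWeightTail α δ)
      (-(logWeight α δ x * (1 - α / ((δ - 1) * Real.log x)))) x := by
  have hx0 : 0 < x := by linarith
  have hlog : 0 < Real.log x := Real.log_pos hx
  have hpow : HasDerivAt (fun y ↦ y ^ (1 - δ)) ((1 - δ) * x ^ (1 - δ - 1)) x :=
    Real.hasDerivAt_rpow_const (.inl hx0.ne')
  have hlogpow : HasDerivAt (fun y ↦ Real.log y ^ α) (α * Real.log x ^ (α - 1) * x⁻¹) x :=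
    (Real.hasDerivAt_rpow_const (.inl hlog.ne')).comp x (Real.hasDerivAt_log hx0.ne')
  refine ((hpow.mul hlogpow).div_const (δ - 1)).congr_deriv ?_
  have hδ' : δ - 1 ≠ 0 := sub_ne_zero.2 hδ
  rw [logWeight, show 1 - δ - 1 = -δ by ring, show 1 - δ = -δ + 1 by ring,
    Real.rpow_add hx0, Real.rpow_neg hx0.le, Real.rpow_sub hlog, Real.rpow_one, Real.rpow_one]
  field_simp
  ring

theorem tendsto_logWeightTail_atTop (hδ : 1 < δ) :
    Tendsto (logWeightTail α δ) atTop (𝓝 0) := by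
  have h := (isLittleO_log_rpow_rpow_atTop α (sub_pos.2 hδ)).tendsto_div_nhds_zero.div_const
    (δ - 1)
  rw [zero_div] at h
  refine h.congr' ((eventually_gt_atTop 0).mono fun x hx ↦ ?_)
  rw [logWeightTail, show 1 - δ = -(δ - 1) by ring, Real.rpow_neg hx.le]
  ring

theorem isEquivalent_logWeight_mul_one_sub :
    (fun x ↦ logWeight α δ x * (1 - α / ((δ - 1) * Real.log x))) ~[atTop] logWeight α δ := by
  have hfactor : Tendsto (fun x ↦ 1 - α / ((δ - 1) * Real.log x)) atTop (𝓝 1) := by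
    have h := (tendsto_const_nhds (x := α / (δ - 1))).div_atTop Real.tendsto_log_atTop
    simpa [div_div] using tendsto_const_nhds.sub h
  simpa [Pi.mul_def] using
    IsEquivalent.refl.mul ((isEquivalent_const_iff_tendsto one_ne_zero).2 hfactor)

theorem Asymptotics.IsEquivalent.logWeight_natCast {u : ℕ → ℝ}
    (hu : u ~[atTop] fun k : ℕ ↦ (k : ℝ)) :
    (fun k ↦ logWeight α δ (u k)) ~[atTop] fun k : ℕ ↦ logWeight α δ k :=
  ((hu.log tendsto_natCast_atTop_atTop).rpow fun k ↦ Real.log_natCast_nonneg k).div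
    (hu.rpow fun k ↦ Nat.cast_nonneg k)

theorem isEquivalent_logWeightTail_sub_succ (hδ : δ ≠ 1) :
    (fun k : ℕ ↦ logWeightTail α δ k - logWeightTail α δ ((k + 1 : ℕ) : ℝ)) ~[atTop]
      fun k : ℕ ↦ logWeight α δ k := by
  have hderiv : ∀ᶠ x in atTop, HasDerivAt (-logWeightTail α δ)
      (logWeight α δ x * (1 - α / ((δ - 1) * Real.log x))) x :=
    (eventually_gt_atTop 1).mono fun x hx ↦ by simpa using (hasDerivAt_logWeightTail hδ hx).neg
  have hD := isEquivalent_logWeight_mul_one_sub (α := α) (δ := δ)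
  have hdiff := isEquivalent_sub_succ_of_hasDerivAt hderiv fun c hc ↦
    have hc' := isEquivalent_natCast_of_mem_Icc hc
    (hD.comp_tendsto (hc'.symm.tendsto_atTop tendsto_natCast_atTop_atTop)).trans
      (hc'.logWeight_natCast.trans (hD.comp_tendsto tendsto_natCast_atTop_atTop).symm)
  refine (hdiff.trans (hD.comp_tendsto tendsto_natCast_atTop_atTop)).congr_left
    (.of_forall fun k ↦ ?_)
  simp only [Pi.neg_apply, Nat.cast_add, Nat.cast_one]
  ring

end LogWeight

theorem stmt_2 (α δ : ℝ) (hδ : 1 < δ) :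
    (fun n : ℕ => ∑' k : ℕ, Log ((n + k : ℕ) : ℝ) ^ α / ((n + k : ℕ) : ℝ) ^ δ)
      ~[atTop] (fun n : ℕ => (n : ℝ) ^ (1 - δ) * Log n ^ α / (δ - 1)) := by
  set G : ℕ → ℝ := fun k ↦ logWeightTail α δ k
  have hLog : ∀ᶠ k : ℕ in atTop, Log k = Real.log k :=
    tendsto_natCast_atTop_atTop.eventually Log_eventuallyEq_log
  have hG : (fun k ↦ G k - G (k + 1)) ~[atTop] fun k : ℕ ↦ logWeight α δ k :=
    isEquivalent_logWeightTail_sub_succ hδ.ne'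
  have hweight : (fun k : ℕ ↦ Log k ^ α / (k : ℝ) ^ δ) =ᶠ[atTop] fun k ↦ logWeight α δ k :=
    hLog.mono fun k hk ↦ by simp only [hk, logWeight]
  have hequiv : (fun k : ℕ ↦ Log k ^ α / (k : ℝ) ^ δ) ~[atTop] fun k ↦ G k - G (k + 1) :=
    hweight.trans_isEquivalent hG.symm
  have hnonneg : ∀ᶠ k in atTop, 0 ≤ G k - G (k + 1) :=
    hG.eventually_nonneg <| (eventually_gt_atTop 1).mono fun k hk ↦
      (logWeight_pos (by exact_mod_cast hk)).le
  have htail := eventually_hasSum_nat_add_sub_succ (G := G)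
    ((tendsto_logWeightTail_atTop hδ).comp tendsto_natCast_atTop_atTop)
    (hnonneg.mono fun k ↦ sub_nonneg.1)
  obtain ⟨N, hN⟩ := htail.exists
  have hsum : Summable fun k ↦ G k - G (k + 1) :=
    (summable_nat_add_iff N).1 <| hN.summable.congr fun k ↦ by rw [add_comm N k]
  refine (hequiv.tsum_nat_add hnonneg hsum).trans_eventuallyEq ?_
  filter_upwards [htail, hLog] with n hn hn'
  rw [hn.tsum_eq, hn']
  rfl
end

section
/- If X and Y are negatively quadrant dependent random variables with finite expectations and XY integrable, then E(XY) ≤ E(X)·E(Y), i.e., Cov(X,Y) ≤ 0. -/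
/-!
Hoeffding's covariance identity. Let `(X', Y')` be an independent copy of `(X, Y)`, realised on
`Ω × Ω` with `μ.prod μ`, so that `2 Cov(X, Y) = E[(X - X')(Y - Y')]`. Pointwise,
`(x - x')(y - y') = ∫∫ (𝟙[x' ≤ s] - 𝟙[x ≤ s]) (𝟙[y' ≤ t] - 𝟙[y ≤ t]) ds dt`, and after Fubini
the inner expectation at `(s, t)` is `2 (P(X ≤ s, Y ≤ t) - P(X ≤ s) P(Y ≤ t))`, which negative
quadrant dependence makes nonpositive.
-/

open MeasureTheory Set

noncomputable def stepDiff (u v t : ℝ) : ℝ := (Ici v).indicator 1 t - (Ici u).indicator 1 t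

lemma stepDiff_of_le {u v : ℝ} (h : v ≤ u) : stepDiff u v = (Ico v u).indicator 1 := by
  funext t
  rw [stepDiff, ← Ici_sdiff_Ici, indicator_sdiff (Ici_subset_Ici.2 h)]
  rfl

lemma stepDiff_swap (u v : ℝ) : stepDiff v u = -stepDiff u v := by
  funext t
  simp [stepDiff]

lemma integrable_stepDiff (u v : ℝ) : Integrable (stepDiff u v) := by
  wlog h : v ≤ u generalizing u v
  · rw [stepDiff_swap v u]
    exact (this v u (le_of_not_ge h)).neg
  rw [stepDiff_of_le h]
  exact (integrable_indicator_iff measurableSet_Ico).2 (integrableOn_const measure_Ico_lt_top.ne)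

lemma integral_stepDiff (u v : ℝ) : ∫ t, stepDiff u v t = u - v := by
  wlog h : v ≤ u generalizing u v
  · rw [stepDiff_swap v u, ← neg_sub, ← this v u (le_of_not_ge h), ← integral_neg]
    rfl
  rw [stepDiff_of_le h, integral_indicator_one measurableSet_Ico, Real.volume_real_Ico_of_le h]

lemma abs_stepDiff (u v t : ℝ) : |stepDiff u v t| = stepDiff (max u v) (min u v) t := by
  rcases le_total v u with h | h
  · rw [max_eq_left h, min_eq_right h, stepDiff_of_le h]
    exact abs_of_nonneg (indicator_nonneg (fun _ _ => zero_le_one) t)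
  · rw [max_eq_right h, min_eq_left h, stepDiff_swap, Pi.neg_apply, abs_neg, stepDiff_of_le h]
    exact abs_of_nonneg (indicator_nonneg (fun _ _ => zero_le_one) t)

lemma integral_abs_stepDiff (u v : ℝ) : ∫ t, |stepDiff u v t| = |u - v| := by
  simp_rw [abs_stepDiff, integral_stepDiff, max_sub_min_eq_abs']

lemma Measurable.stepDiff {α : Type*} [MeasurableSpace α] {f g h : α → ℝ}
    (hf : Measurable f) (hg : Measurable g) (hh : Measurable h) :
    Measurable fun a => stepDiff (f a) (g a) (h a) := by
  simp only [_root_.stepDiff, indicator_apply, mem_Ici, Pi.one_apply]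
  exact (measurable_const.ite (measurableSet_le hg hh) measurable_const).sub
    (measurable_const.ite (measurableSet_le hf hh) measurable_const)

lemma integral_stepDiff_mul_stepDiff (u v u' v' : ℝ) :
    ∫ q : ℝ × ℝ, stepDiff u v q.1 * stepDiff u' v' q.2 = (u - v) * (u' - v') := by
  rw [Measure.volume_eq_prod, integral_prod_mul, integral_stepDiff, integral_stepDiff]

lemma integrable_stepDiff_mul_stepDiff_prod {α : Type*} [MeasurableSpace α] {ν : Measure α}
    [SFinite ν] {f₁ f₂ g₁ g₂ : α → ℝ} (hf₁ : Measurable f₁) (hf₂ : Measurable f₂)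
    (hg₁ : Measurable g₁) (hg₂ : Measurable g₂)
    (hint : Integrable (fun a => (f₁ a - f₂ a) * (g₁ a - g₂ a)) ν) :
    Integrable (fun z : α × (ℝ × ℝ) =>
      stepDiff (f₁ z.1) (f₂ z.1) z.2.1 * stepDiff (g₁ z.1) (g₂ z.1) z.2.2) (ν.prod volume) := by
  have hmeas : Measurable fun z : α × (ℝ × ℝ) =>
      stepDiff (f₁ z.1) (f₂ z.1) z.2.1 * stepDiff (g₁ z.1) (g₂ z.1) z.2.2 :=
    ((hf₁.comp measurable_fst).stepDiff (hf₂.comp measurable_fst) measurable_snd.fst).mul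
      ((hg₁.comp measurable_fst).stepDiff (hg₂.comp measurable_fst) measurable_snd.snd)
  refine (integrable_prod_iff hmeas.aestronglyMeasurable).2 ⟨ae_of_all _ fun a => ?_, ?_⟩
  · dsimp only
    rw [Measure.volume_eq_prod]
    exact (integrable_stepDiff _ _).mul_prod (integrable_stepDiff _ _)
  · have hnorm (a : α) : ∫ q : ℝ × ℝ, ‖stepDiff (f₁ a) (f₂ a) q.1 * stepDiff (g₁ a) (g₂ a) q.2‖ =
        |(f₁ a - f₂ a) * (g₁ a - g₂ a)| := by
      simp only [norm_mul, Real.norm_eq_abs, Measure.volume_eq_prod]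
      rw [integral_prod_mul (fun t => |stepDiff (f₁ a) (f₂ a) t|)
        (fun t => |stepDiff (g₁ a) (g₂ a) t|), integral_abs_stepDiff, integral_abs_stepDiff, abs_mul]
    simpa only [hnorm] using hint.abs

lemma stepDiff_mul_stepDiff_eq_indicator {Ω : Type*} (X Y : Ω → ℝ) (ω ω' : Ω) (s t : ℝ) :
    stepDiff (X ω) (X ω') s * stepDiff (Y ω) (Y ω') t =
      ((X ⁻¹' Iic s).indicator 1 ω - (X ⁻¹' Iic s).indicator 1 ω') *
        ((Y ⁻¹' Iic t).indicator 1 ω - (Y ⁻¹' Iic t).indicator 1 ω') := by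
  classical
  simp only [stepDiff, indicator_apply, mem_Ici, mem_preimage, mem_Iic, Pi.one_apply]
  split_ifs <;> norm_num

section IndependentCopy

variable {Ω : Type*} [MeasurableSpace Ω] {μ : Measure Ω} [IsProbabilityMeasure μ] {f g : Ω → ℝ}

lemma integrable_prod_sub_mul_sub (hf : Integrable f μ) (hg : Integrable g μ)
    (hfg : Integrable (fun ω => f ω * g ω) μ) :
    Integrable (fun p : Ω × Ω => (f p.1 - f p.2) * (g p.1 - g p.2)) (μ.prod μ) := by
  have h := ((hfg.comp_fst μ).sub (hf.mul_prod hg)).sub ((hg.mul_prod hf).sub (hfg.comp_snd μ))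
  refine h.congr (ae_of_all _ fun p => ?_)
  simp only [Pi.sub_apply]
  ring

lemma integral_prod_sub_mul_sub (hf : Integrable f μ) (hg : Integrable g μ)
    (hfg : Integrable (fun ω => f ω * g ω) μ) :
    ∫ p, (f p.1 - f p.2) * (g p.1 - g p.2) ∂(μ.prod μ) =
      2 * (∫ ω, f ω * g ω ∂μ - (∫ ω, f ω ∂μ) * ∫ ω, g ω ∂μ) := by
  have h₁ : Integrable (fun p : Ω × Ω => f p.1 * g p.1 - f p.1 * g p.2) (μ.prod μ) :=
    (hfg.comp_fst μ).sub (hf.mul_prod hg)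
  have h₂ : Integrable (fun p : Ω × Ω => g p.1 * f p.2 - f p.2 * g p.2) (μ.prod μ) :=
    (hg.mul_prod hf).sub (hfg.comp_snd μ)
  calc ∫ p, (f p.1 - f p.2) * (g p.1 - g p.2) ∂(μ.prod μ)
      = ∫ p, (f p.1 * g p.1 - f p.1 * g p.2) - (g p.1 * f p.2 - f p.2 * g p.2) ∂(μ.prod μ) := by
        congr with p; ring
    _ = 2 * (∫ ω, f ω * g ω ∂μ - (∫ ω, f ω ∂μ) * ∫ ω, g ω ∂μ) := by
        rw [integral_sub h₁ h₂, integral_sub (hfg.comp_fst μ) (hf.mul_prod hg),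
          integral_sub (hg.mul_prod hf) (hfg.comp_snd μ), integral_fun_fst (fun ω => f ω * g ω),
          integral_fun_snd (fun ω => f ω * g ω), integral_prod_mul, integral_prod_mul]
        simp only [probReal_univ, one_smul]
        ring

lemma integral_prod_indicator_sub_mul_sub_nonpos {A B : Set Ω} (hA : MeasurableSet A)
    (hB : MeasurableSet B) (hAB : μ (A ∩ B) ≤ μ A * μ B) :
    ∫ p, (A.indicator 1 p.1 - A.indicator 1 p.2) * (B.indicator 1 p.1 - B.indicator 1 p.2)
      ∂(μ.prod μ) ≤ (0 : ℝ) := by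
  have hmul : (fun ω => A.indicator (1 : Ω → ℝ) ω * B.indicator 1 ω) = (A ∩ B).indicator 1 := by
    rw [inter_indicator_one]
    rfl
  have hint (C : Set Ω) (hC : MeasurableSet C) : Integrable (C.indicator (1 : Ω → ℝ)) μ :=
    (integrable_const 1).indicator hC
  rw [integral_prod_sub_mul_sub (hint A hA) (hint B hB) (hmul ▸ hint _ (hA.inter hB)), hmul,
    integral_indicator_one (hA.inter hB), integral_indicator_one hA, integral_indicator_one hB]
  have hreal : μ.real (A ∩ B) ≤ μ.real A * μ.real B := by
    simpa only [measureReal_def, ENNReal.toReal_mul] using ENNReal.toReal_mono (by finiteness) hAB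
  linarith

end IndependentCopy

theorem stmt_12 {Ω : Type*} [MeasurableSpace Ω] (μ : Measure Ω) [IsProbabilityMeasure μ]
    (X Y : Ω → ℝ) (hXm : Measurable X) (hYm : Measurable Y)
    (hX : Integrable X μ) (hY : Integrable Y μ)
    (hXY : Integrable (fun ω => X ω * Y ω) μ)
    (hNQD : ∀ x y : ℝ,
      μ {ω | X ω ≤ x ∧ Y ω ≤ y} ≤ μ {ω | X ω ≤ x} * μ {ω | Y ω ≤ y}) :
    ∫ ω, X ω * Y ω ∂μ ≤ (∫ ω, X ω ∂μ) * ∫ ω, Y ω ∂μ := by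
  set F : Ω × Ω → ℝ × ℝ → ℝ := fun p q =>
    stepDiff (X p.1) (X p.2) q.1 * stepDiff (Y p.1) (Y p.2) q.2
  have hF : Integrable (Function.uncurry F) ((μ.prod μ).prod volume) :=
    integrable_stepDiff_mul_stepDiff_prod (hXm.comp measurable_fst) (hXm.comp measurable_snd)
      (hYm.comp measurable_fst) (hYm.comp measurable_snd) (integrable_prod_sub_mul_sub hX hY hXY)
  have hF_nonpos (q : ℝ × ℝ) : ∫ p, F p q ∂(μ.prod μ) ≤ 0 := by
    simp only [F, stepDiff_mul_stepDiff_eq_indicator]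
    exact integral_prod_indicator_sub_mul_sub_nonpos (hXm measurableSet_Iic)
      (hYm measurableSet_Iic) (hNQD q.1 q.2)
  have hcov : 2 * (∫ ω, X ω * Y ω ∂μ - (∫ ω, X ω ∂μ) * ∫ ω, Y ω ∂μ) ≤ 0 :=
    calc 2 * (∫ ω, X ω * Y ω ∂μ - (∫ ω, X ω ∂μ) * ∫ ω, Y ω ∂μ)
        = ∫ p, (∫ q, F p q) ∂(μ.prod μ) := by
          simp only [F, integral_stepDiff_mul_stepDiff, integral_prod_sub_mul_sub hX hY hXY]
      _ = ∫ q, ∫ p, F p q ∂(μ.prod μ) := integral_integral_swap hF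
      _ ≤ 0 := integral_nonpos hF_nonpos
  linarith
end

section
/- Let {X_n, n ≥ 1} be nonnegative random variables with E X_n < ∞, {b_n} a nondecreasing unbounded sequence of positive constants, and {a_n} nonnegative constants. Suppose there exist increasing unbounded sequences of positive integers {m_k}, {ℓ_k} such that: (i) limsup_k b_{m_{k+1}}/b_{m_k} < ∞ and liminf_k ∑_{j=m_k}^{m_{k+1}-1} a_j > 0; (ii) ∑_{j=ℓ_k+1}^{ℓ_{k+1}} E X_j = o(b_{ℓ_k}) as k → ∞; (iii) for all ε > 0, ∑_{k=1}^∞ P(max_{1 ≤ n ≤ k+1} |∑_{i=1}^{ℓ_n} (X_i - E X_i)| > ε b_{ℓ_k}) · ∑_{j=ℓ_k+1}^{ℓ_{k+1}} a_j < ∞. Then (1/b_n) ∑_{k=1}^n (X_k - E X_k) → 0 almost surely. -/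
/-!
Since `X ≥ 0`, for `ℓ k < n ≤ ℓ (k + 1)` the centred partial sum `S n` lies between
`S (ℓ k) - D k` and `S (ℓ (k + 1)) + D k`, where `D k` is the expectation mass of the block
`(ℓ k, ℓ (k + 1)]`; by (ii) it therefore suffices to show that `S (ℓ k)` and `S (ℓ (k + 1))` are
`o(b (ℓ k))` almost surely.

Call `k` bad if `max_{n ≤ k + 1} |S (ℓ n)| > ε b (ℓ k)`. Condition (i) provides, from every large
`k` on, a run of consecutive `ℓ`-blocks of total `a`-weight at least `δ` along which `b ∘ ℓ` grows
at most by a fixed factor `C`; so if `k` is bad for `ε`, every index of its run is bad for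
`ε / C`. By (iii), a weighted Borel–Cantelli argument shows that almost surely the indices bad
for `ε / C` carry finite total weight, hence only finitely many `k` are bad for `ε`.
-/

open MeasureTheory Filter Finset
open scoped ENNReal Topology

lemma sum_Icc_one_sub_sum_Icc_one {M : Type*} [AddCommGroup M] (f : ℕ → M) {u v : ℕ}
    (huv : u ≤ v) : ∑ i ∈ Icc 1 v, f i - ∑ i ∈ Icc 1 u, f i = ∑ i ∈ Ioc u v, f i := by
  have hIcc (n : ℕ) : Icc 1 n = Ioc 0 n := Icc_add_one_left_eq_Ioc 0 n
  rw [hIcc, hIcc, ← sum_Ioc_consecutive f (Nat.zero_le u) huv, add_sub_cancel_left]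

lemma neg_sum_Ioc_le_sum_Ioc {f c : ℕ → ℝ} (hc : ∀ i, 0 ≤ c i) (hf : ∀ i, -c i ≤ f i)
    {u p q v : ℕ} (hup : u ≤ p) (hqv : q ≤ v) :
    -∑ i ∈ Ioc u v, c i ≤ ∑ i ∈ Ioc p q, f i :=
  calc -∑ i ∈ Ioc u v, c i ≤ -∑ i ∈ Ioc p q, c i :=
        neg_le_neg (sum_le_sum_of_subset_of_nonneg (Ioc_subset_Ioc hup hqv) fun i _ _ => hc i)
    _ = ∑ i ∈ Ioc p q, -c i := by rw [sum_neg_distrib]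
    _ ≤ ∑ i ∈ Ioc p q, f i := sum_le_sum fun i _ => hf i

lemma abs_sum_Icc_one_le {f c : ℕ → ℝ} (hc : ∀ i, 0 ≤ c i) (hf : ∀ i, -c i ≤ f i)
    {u n v : ℕ} (hun : u ≤ n) (hnv : n ≤ v) :
    |∑ i ∈ Icc 1 n, f i| ≤
      |∑ i ∈ Icc 1 u, f i| + |∑ i ∈ Icc 1 v, f i| + ∑ i ∈ Ioc u v, c i := by
  have hlo := neg_sum_Ioc_le_sum_Ioc hc hf (p := u) (q := n) le_rfl hnv
  have hhi := neg_sum_Ioc_le_sum_Ioc hc hf (q := v) hun le_rfl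
  rw [← sum_Icc_one_sub_sum_Icc_one f hun] at hlo
  rw [← sum_Icc_one_sub_sum_Icc_one f hnv] at hhi
  rw [abs_le]
  constructor <;>
    linarith [neg_abs_le (∑ i ∈ Icc 1 u, f i), le_abs_self (∑ i ∈ Icc 1 v, f i),
      abs_nonneg (∑ i ∈ Icc 1 u, f i), abs_nonneg (∑ i ∈ Icc 1 v, f i)]

lemma sum_Icc_sum_Ioc_eq_sum_Ioc {M : Type*} [AddCommMonoid M] {ℓ : ℕ → ℕ} (hℓ : Monotone ℓ)
    (a : ℕ → M) {k r : ℕ} (hkr : k ≤ r) :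
    ∑ k' ∈ Icc k r, ∑ j ∈ Ioc (ℓ k') (ℓ (k' + 1)), a j = ∑ j ∈ Ioc (ℓ k) (ℓ (r + 1)), a j := by
  induction r, hkr using Nat.le_induction with
  | base => simp
  | succ r hkr ih =>
    rw [sum_Icc_succ_top (by omega), ih]
    exact sum_Ioc_consecutive a (hℓ (by omega)) (hℓ (by omega))

/-- The run starting at `k` is chosen to cover the whole `m`-block `[m (i + 1), m (i + 2))`,
where `m i ≤ ℓ k < m (i + 1)`. -/
lemma eventually_exists_block {b a : ℕ → ℝ} {m ℓ : ℕ → ℕ} (hb : ∀ n, 0 < b n)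
    (hbmono : Monotone b) (ha : ∀ n, 0 ≤ a n) (hm : StrictMono m) (hℓ : StrictMono ℓ)
    {M δ : ℝ} (hM : ∀ᶠ k in atTop, b (m (k + 1)) / b (m k) ≤ M)
    (hδ : ∀ᶠ k in atTop, δ ≤ ∑ j ∈ Ico (m k) (m (k + 1)), a j) :
    ∀ᶠ k in atTop, ∃ r ≥ k, (∀ k' ∈ Icc k r, b (ℓ k') ≤ M ^ 2 * b (ℓ k)) ∧
      δ ≤ ∑ k' ∈ Icc k r, ∑ j ∈ Ioc (ℓ k') (ℓ (k' + 1)), a j := by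
  obtain ⟨K, hK⟩ := eventually_atTop.1 (hM.and hδ)
  have hmul : ∀ i ≥ K, b (m (i + 1)) ≤ M * b (m i) := fun i hi =>
    (div_le_iff₀ (hb _)).1 (hK i hi).1
  have hM0 : 0 ≤ M := (div_pos (hb _) (hb _)).le.trans (hK K le_rfl).1
  filter_upwards [hℓ.tendsto_atTop.eventually_ge_atTop (m K)] with k hk
  obtain ⟨i, hik, hki⟩ : ∃ i, m i < ℓ k + 1 ∧ ℓ k + 1 ≤ m (i + 1) :=
    hm.exists_between_of_tendsto_atTop hm.tendsto_atTop
      (by have := hm.monotone (Nat.zero_le K); omega)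
  have hiK : K ≤ i := Nat.lt_add_one_iff.1 (hm.lt_iff_lt.1 (by omega))
  have hmi := hm (lt_add_one (i + 1))
  obtain ⟨q, hqi, hiq⟩ : ∃ q, ℓ q < m (i + 1 + 1) ∧ m (i + 1 + 1) ≤ ℓ (q + 1) :=
    hℓ.exists_between_of_tendsto_atTop hℓ.tendsto_atTop
      (by have := hℓ.monotone (Nat.zero_le k); omega)
  have hkq : k ≤ q := Nat.lt_add_one_iff.1 (hℓ.lt_iff_lt.1 (by omega))
  have hbi : b (m (i + 1 + 1)) ≤ M ^ 2 * b (ℓ k) :=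
    calc b (m (i + 1 + 1)) ≤ M * b (m (i + 1)) := hmul (i + 1) (by omega)
      _ ≤ M * (M * b (m i)) := mul_le_mul_of_nonneg_left (hmul i hiK) hM0
      _ ≤ M * (M * b (ℓ k)) := by gcongr; exact hbmono (by omega)
      _ = M ^ 2 * b (ℓ k) := by ring
  refine ⟨q, hkq, fun k' hk' => ?_, ?_⟩
  · have := hℓ.monotone (mem_Icc.1 hk').2
    exact (hbmono (by omega)).trans hbi
  · rw [sum_Icc_sum_Ioc_eq_sum_Ioc hℓ.monotone a hkq]
    refine (hK (i + 1) (by omega)).2.trans (sum_le_sum_of_subset_of_nonneg ?_ fun j _ _ => ha j)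
    intro j hj
    simp only [mem_Ico, mem_Ioc] at hj ⊢
    omega

lemma eventually_sum_Icc_lt_of_summable_indicator {w : ℕ → ℝ} {J : Set ℕ}
    (hJ : Summable (J.indicator w)) {δ : ℝ} (hδ : 0 < δ) :
    ∀ᶠ k in atTop, ∀ r, (Icc k r : Set ℕ) ⊆ J → ∑ k' ∈ Icc k r, w k' < δ := by
  obtain ⟨s, hs⟩ := hJ.vanishing (Iio_mem_nhds hδ)
  obtain ⟨N, hN⟩ := s.exists_nat_subset_range
  filter_upwards [eventually_ge_atTop N] with k hk r hJkr
  have hdisj : Disjoint (Icc k r) s := by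
    refine disjoint_left.2 fun j hj hjs => ?_
    have := mem_range.1 (hN hjs)
    have := (mem_Icc.1 hj).1
    omega
  rw [sum_congr rfl fun j hj => (Set.indicator_of_mem (hJkr hj) w).symm]
  exact hs _ hdisj

lemma ae_summable_indicator_of_summable_measure_mul {Ω : Type*} [MeasurableSpace Ω]
    {μ : Measure Ω} [IsFiniteMeasure μ] {s : ℕ → Set Ω} {w : ℕ → ℝ} (hw : ∀ k, 0 ≤ w k)
    (h : Summable fun k => (μ (s k)).toReal * w k) :
    ∀ᵐ ω ∂μ, Summable ({k | ω ∈ s k}.indicator w) := by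
  set g : ℕ → Ω → ℝ≥0∞ := fun k => (toMeasurable μ (s k)).indicator fun _ => ENNReal.ofReal (w k)
  have hg : ∀ k, Measurable (g k) := fun k =>
    measurable_const.indicator (measurableSet_toMeasurable _ _)
  have hint : ∫⁻ ω, ∑' k, g k ω ∂μ ≠ ∞ := by
    have hgk : ∀ k, ∫⁻ ω, g k ω ∂μ = ENNReal.ofReal ((μ (s k)).toReal * w k) := fun k => by
      rw [lintegral_indicator_const (measurableSet_toMeasurable _ _), measure_toMeasurable,
        ENNReal.ofReal_mul ENNReal.toReal_nonneg, ENNReal.ofReal_toReal (measure_ne_top _ _),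
        mul_comm]
    rw [lintegral_tsum fun k => (hg k).aemeasurable, tsum_congr hgk,
      ← ENNReal.ofReal_tsum_of_nonneg (fun k => mul_nonneg ENNReal.toReal_nonneg (hw k)) h]
    exact ENNReal.ofReal_ne_top
  filter_upwards [ae_lt_top (Measurable.tsum hg) hint] with ω hω
  refine (ENNReal.summable_toReal hω.ne).of_nonneg_of_le
    (fun k => Set.indicator_nonneg (fun k _ => hw k) k) fun k => ?_
  by_cases hk : ω ∈ s k
  · simp [g, hk, subset_toMeasurable μ (s k) hk, hw k]
  · simp [hk]

lemma ae_eventually_abs_le_of_summable {Ω : Type*} [MeasurableSpace Ω] {μ : Measure Ω}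
    [IsFiniteMeasure μ] {Z : ℕ → Ω → ℝ} {c w : ℕ → ℝ} (hw : ∀ k, 0 ≤ w k) {C δ : ℝ}
    (hC : 0 < C) (hδ : 0 < δ)
    (hblock : ∀ᶠ k in atTop, ∃ r ≥ k, (∀ k' ∈ Icc k r, c k' ≤ C * c k) ∧
      δ ≤ ∑ k' ∈ Icc k r, w k')
    (hsum : ∀ ε > 0, Summable fun k =>
      (μ {ω | ∃ n ∈ Icc 1 (k + 1), ε * c k < |Z n ω|}).toReal * w k)
    {ε : ℝ} (hε : 0 < ε) :
    ∀ᵐ ω ∂μ, ∀ᶠ k in atTop, ∀ n ∈ Icc 1 (k + 1), |Z n ω| ≤ ε * c k := by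
  filter_upwards [ae_summable_indicator_of_summable_measure_mul hw
    (hsum (ε / C) (div_pos hε hC))] with ω hω
  filter_upwards [hblock, eventually_sum_Icc_lt_of_summable_indicator hω hδ]
    with k hrun hsmall
  obtain ⟨r, -, hcr, hδr⟩ := hrun
  by_contra! hbad
  obtain ⟨n, hn, hlt⟩ := hbad
  refine (hsmall r fun k' hk' => ?_).not_ge hδr
  rw [coe_Icc, Set.mem_Icc] at hk'
  refine ⟨n, mem_Icc.2 ⟨(mem_Icc.1 hn).1, by have := (mem_Icc.1 hn).2; omega⟩, ?_⟩
  calc ε / C * c k' ≤ ε / C * (C * c k) :=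
        mul_le_mul_of_nonneg_left (hcr k' (mem_Icc.2 hk')) (div_pos hε hC).le
    _ = ε * c k := by field_simp
    _ < |Z n ω| := hlt

lemma tendsto_sum_Icc_div_of_blocks {f c b : ℕ → ℝ} {ℓ : ℕ → ℕ} (hc : ∀ i, 0 ≤ c i)
    (hf : ∀ i, -c i ≤ f i) (hb : ∀ n, 0 < b n) (hbmono : Monotone b) (hℓ : StrictMono ℓ)
    (hD : Tendsto (fun k => (∑ j ∈ Ioc (ℓ k) (ℓ (k + 1)), c j) / b (ℓ k)) atTop (𝓝 0))
    (hS : ∀ ε > 0, ∀ᶠ k in atTop, |∑ i ∈ Icc 1 (ℓ k), f i| ≤ ε * b (ℓ k) ∧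
      |∑ i ∈ Icc 1 (ℓ (k + 1)), f i| ≤ ε * b (ℓ k)) :
    Tendsto (fun n => (∑ i ∈ Icc 1 n, f i) / b n) atTop (𝓝 0) := by
  rw [Metric.tendsto_atTop]
  intro ε hε
  obtain ⟨K, hK⟩ := eventually_atTop.1
    ((hS (ε / 3) (by positivity)).and (hD.eventually (Iio_mem_nhds (by positivity : 0 < ε / 3))))
  refine ⟨ℓ K + 1, fun n hn => ?_⟩
  obtain ⟨k, hkn, hnk⟩ : ∃ k, ℓ k < n ∧ n ≤ ℓ (k + 1) :=
    hℓ.exists_between_of_tendsto_atTop hℓ.tendsto_atTop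
      (by have := hℓ.monotone (Nat.zero_le K); omega)
  have hKk : K ≤ k := Nat.lt_add_one_iff.1 (hℓ.lt_iff_lt.1 (by omega))
  obtain ⟨⟨hSk, hSk'⟩, hDk⟩ := hK k hKk
  rw [div_lt_iff₀ (hb _)] at hDk
  rw [Real.dist_eq, sub_zero, abs_div, abs_of_pos (hb n), div_lt_iff₀ (hb n)]
  calc |∑ i ∈ Icc 1 n, f i| < ε * b (ℓ k) := by
        linarith [abs_sum_Icc_one_le hc hf hkn.le hnk]
    _ ≤ ε * b n := mul_le_mul_of_nonneg_left (hbmono hkn.le) hε.le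

theorem stmt_15_general {Ω : Type*} [MeasurableSpace Ω] (μ : Measure Ω) [IsProbabilityMeasure μ]
    (X : ℕ → Ω → ℝ) (hXnn : ∀ n ω, 0 ≤ X n ω)
    (b : ℕ → ℝ) (hbpos : ∀ n, 0 < b n) (hbmono : Monotone b)
    (a : ℕ → ℝ) (hann : ∀ n, 0 ≤ a n)
    (m ℓ : ℕ → ℕ) (hm : StrictMono m) (hℓ : StrictMono ℓ)
    (hi1 : ∃ M : ℝ, ∀ᶠ k in atTop, b (m (k + 1)) / b (m k) ≤ M)
    (hi2 : ∃ δ : ℝ, 0 < δ ∧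
      ∀ᶠ k in atTop, δ ≤ ∑ j ∈ Finset.Ico (m k) (m (k + 1)), a j)
    (hii : Tendsto (fun k : ℕ =>
      (∑ j ∈ Finset.Ioc (ℓ k) (ℓ (k + 1)), ∫ ω, X j ω ∂μ) / b (ℓ k)) atTop (nhds 0))
    (hiii : ∀ ε : ℝ, 0 < ε →
      Summable (fun k : ℕ =>
        (μ {ω | ∃ n ∈ Finset.Icc 1 (k + 1),
            ε * b (ℓ k) < |∑ i ∈ Finset.Icc 1 (ℓ n), (X i ω - ∫ ω', X i ω' ∂μ)|}).toReal *
          ∑ j ∈ Finset.Ioc (ℓ k) (ℓ (k + 1)), a j)) :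
    ∀ᵐ ω ∂μ, Tendsto (fun n : ℕ =>
      (∑ k ∈ Finset.Icc 1 n, (X k ω - ∫ ω', X k ω' ∂μ)) / b n) atTop (nhds 0) := by
  obtain ⟨M, hM⟩ := hi1
  obtain ⟨δ, hδ, hδk⟩ := hi2
  have hM0 : 0 < M := by
    obtain ⟨k, hk⟩ := hM.exists
    exact (div_pos (hbpos _) (hbpos _)).trans_le hk
  have hkey : ∀ j : ℕ, ∀ᵐ ω ∂μ, ∀ᶠ k in atTop, ∀ n ∈ Icc 1 (k + 1),
      |∑ i ∈ Icc 1 (ℓ n), (X i ω - ∫ ω', X i ω' ∂μ)| ≤ 1 / (j + 1) * b (ℓ k) := fun j =>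
    ae_eventually_abs_le_of_summable (c := fun k => b (ℓ k))
      (fun k => sum_nonneg fun i _ => hann i) (pow_pos hM0 2) hδ
      (eventually_exists_block hbpos hbmono hann hm hℓ hM hδk) hiii Nat.one_div_pos_of_nat
  filter_upwards [ae_all_iff.2 hkey] with ω hω
  refine tendsto_sum_Icc_div_of_blocks (fun i => integral_nonneg (hXnn i))
    (fun i => by linarith [hXnn i ω]) hbpos hbmono hℓ hii fun ε hε => ?_
  obtain ⟨j, hj⟩ := exists_nat_one_div_lt hε
  filter_upwards [hω j, eventually_ge_atTop 1] with k hk hk1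
  have hjε : 1 / (j + 1 : ℝ) * b (ℓ k) ≤ ε * b (ℓ k) :=
    mul_le_mul_of_nonneg_right hj.le (hbpos _).le
  exact ⟨(hk k (mem_Icc.2 ⟨hk1, by omega⟩)).trans hjε,
    (hk (k + 1) (mem_Icc.2 ⟨by omega, le_rfl⟩)).trans hjε⟩

theorem stmt_15 {Ω : Type*} [MeasurableSpace Ω] (μ : Measure Ω) [IsProbabilityMeasure μ]
    (X : ℕ → Ω → ℝ) (hXnn : ∀ n ω, 0 ≤ X n ω) (hXint : ∀ n, Integrable (X n) μ)
    (b : ℕ → ℝ) (hbpos : ∀ n, 0 < b n) (hbmono : Monotone b)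
    (hbtop : Tendsto b atTop atTop)
    (a : ℕ → ℝ) (hann : ∀ n, 0 ≤ a n)
    (m ℓ : ℕ → ℕ) (hm : StrictMono m) (hℓ : StrictMono ℓ)
    (hm1 : ∀ k, 1 ≤ m k) (hℓ1 : ∀ k, 1 ≤ ℓ k)
    (hi1 : ∃ M : ℝ, ∀ᶠ k in atTop, b (m (k + 1)) / b (m k) ≤ M)
    (hi2 : ∃ δ : ℝ, 0 < δ ∧
      ∀ᶠ k in atTop, δ ≤ ∑ j ∈ Finset.Ico (m k) (m (k + 1)), a j)
    (hii : Tendsto (fun k : ℕ =>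
      (∑ j ∈ Finset.Ioc (ℓ k) (ℓ (k + 1)), ∫ ω, X j ω ∂μ) / b (ℓ k)) atTop (nhds 0))
    (hiii : ∀ ε : ℝ, 0 < ε →
      Summable (fun k : ℕ =>
        (μ {ω | ∃ n ∈ Finset.Icc 1 (k + 1),
            ε * b (ℓ k) < |∑ i ∈ Finset.Icc 1 (ℓ n), (X i ω - ∫ ω', X i ω' ∂μ)|}).toReal *
          ∑ j ∈ Finset.Ioc (ℓ k) (ℓ (k + 1)), a j)) :
    ∀ᵐ ω ∂μ, Tendsto (fun n : ℕ =>
      (∑ k ∈ Finset.Icc 1 n, (X k ω - ∫ ω', X k ω' ∂μ)) / b n) atTop (nhds 0) :=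
  stmt_15_general μ X hXnn b hbpos hbmono a hann m ℓ hm hℓ hi1 hi2 hii hiii
end
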